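/- (Quadratic energy conservation of the EQ reformulation.) Let N be a positive natural number, and work in ℝ^N with the standard inner product ⟨·,·⟩ and componentwise (pointwise) product ⊙. Let S : ℝ^N → ℝ^N be a linear map with ⟨S v, v⟩ = 0 for all v ∈ ℝ^N. Let u, q : ℝ → ℝ^N be differentiable and satisfy u'(t) = S( u(t) + (1/6) q(t) + (1/3) u(t) ⊙ u(t) ) and q'(t) = 2 u(t) ⊙ u'(t) for all t. Then the quadratic energy E(t) = ½ ⟨u(t), u(t)⟩ + (1/6) ⟨u(t), q(t)⟩ is constant in t. -/

import Mathlib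

open scoped RealInnerProductSpace

/-- Componentwise (pointwise) product on `EuclideanSpace ℝ (Fin N)`. -/
def cwMul {N : ℕ} (v w : EuclideanSpace ℝ (Fin N)) : EuclideanSpace ℝ (Fin N) :=
  WithLp.toLp 2 (fun i => v i * w i)

lemma inner_cwMul_right {N : ℕ} (a b c : EuclideanSpace ℝ (Fin N)) :
    ⟪a, cwMul b c⟫ = ⟪cwMul a b, c⟫ := by
  simp only [PiLp.inner_apply, RCLike.inner_apply, conj_trivial, cwMul]
  exact Finset.sum_congr rfl fun i _ => by ring

lemma HasDerivAt.quadratic_energy {F : Type*} [NormedAddCommGroup F] [InnerProductSpace ℝ F]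
    {u q : ℝ → F} {u' q' : F} {t : ℝ} (hu : HasDerivAt u u' t) (hq : HasDerivAt q q' t) :
    HasDerivAt (fun t => (1/2 : ℝ) * ⟪u t, u t⟫ + (1/6 : ℝ) * ⟪u t, q t⟫)
      (⟪u', u t + (1/6 : ℝ) • q t⟫ + (1/6 : ℝ) * ⟪u t, q'⟫) t := by
  refine (((hu.inner ℝ hu).const_mul _).add ((hu.inner ℝ hq).const_mul _)).congr_deriv ?_
  rw [inner_add_right, inner_smul_right, real_inner_comm u' (u t)]
  ring

/-- Along the EQ flow `q' = 2 u ⊙ u'`, the energy derivative is `u'` paired with the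
variational derivative `u + q/6 + u ⊙ u/3` of the original Hamiltonian. -/
lemma HasDerivAt.quadratic_energy_of_eq {N : ℕ} {u q : ℝ → EuclideanSpace ℝ (Fin N)}
    {u' : EuclideanSpace ℝ (Fin N)} {t : ℝ} (hu : HasDerivAt u u' t)
    (hq : HasDerivAt q ((2 : ℝ) • cwMul (u t) u') t) :
    HasDerivAt (fun t => (1/2 : ℝ) * ⟪u t, u t⟫ + (1/6 : ℝ) * ⟪u t, q t⟫)
      ⟪u', u t + (1/6 : ℝ) • q t + (1/3 : ℝ) • cwMul (u t) (u t)⟫ t := by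
  refine (hu.quadratic_energy hq).congr_deriv ?_
  rw [inner_add_right _ (u t + _), inner_smul_right, inner_smul_right, inner_cwMul_right,
    real_inner_comm u']
  ring

theorem eq_reformulation_quadratic_energy_conservation
    (N : ℕ)
    (S : EuclideanSpace ℝ (Fin N) →ₗ[ℝ] EuclideanSpace ℝ (Fin N))
    (hS : ∀ v : EuclideanSpace ℝ (Fin N), ⟪S v, v⟫ = 0)
    (u q : ℝ → EuclideanSpace ℝ (Fin N))
    (hu : Differentiable ℝ u) (hq : Differentiable ℝ q)
    (hueq : ∀ t, deriv u t
      = S (u t + (1/6 : ℝ) • q t + (1/3 : ℝ) • cwMul (u t) (u t)))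
    (hqeq : ∀ t, deriv q t = (2 : ℝ) • cwMul (u t) (deriv u t)) :
    ∀ t₁ t₂ : ℝ,
      (1/2 : ℝ) * ⟪u t₁, u t₁⟫ + (1/6 : ℝ) * ⟪u t₁, q t₁⟫
        = (1/2 : ℝ) * ⟪u t₂, u t₂⟫ + (1/6 : ℝ) * ⟪u t₂, q t₂⟫ := by
  have hE : ∀ t, HasDerivAt (fun t => (1/2 : ℝ) * ⟪u t, u t⟫ + (1/6 : ℝ) * ⟪u t, q t⟫) 0 t := by
    intro t
    have h := (hu t).hasDerivAt.quadratic_energy_of_eq (hqeq t ▸ (hq t).hasDerivAt)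
    rwa [hueq t, hS] at h
  exact is_const_of_deriv_eq_zero (fun t => (hE t).differentiableAt) (fun t => (hE t).deriv)
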